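/- arXiv:2404.07007 — 3 statements merged into one kernel-verified Lean document; each statement's English description precedes it below -/
import Mathlib

section
/- For every vector v ∈ ℝ^d, the solution satisfies m_0 ≤ ⟨x_i(t), v⟩ ≤ M_0 and m_0 ≤ ⟨y_j(t), v⟩ ≤ M_0, for all t ≥ −τ when i = 1,…,k and j = 1,…,h, and for all t ≥ 0 when i = k+1,…,N and j = h+1,…,M. -/
open Real Set Filter Topology
open scoped BigOperators RealInnerProductSpace

noncomputable section

/-- `Λ` : the maximum of the sup-norms of the four (positive) influence functions. -/
def Lam {d : ℕ} (ψ ψs φ φs : EuclideanSpace ℝ (Fin d) → EuclideanSpace ℝ (Fin d) → ℝ) : ℝ :=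
  max
    (max (⨆ p : EuclideanSpace ℝ (Fin d) × EuclideanSpace ℝ (Fin d), ψ p.1 p.2)
         (⨆ p : EuclideanSpace ℝ (Fin d) × EuclideanSpace ℝ (Fin d), ψs p.1 p.2))
    (max (⨆ p : EuclideanSpace ℝ (Fin d) × EuclideanSpace ℝ (Fin d), φ p.1 p.2)
         (⨆ p : EuclideanSpace ℝ (Fin d) × EuclideanSpace ℝ (Fin d), φs p.1 p.2))

/-- An influence function is admissible when it is continuous, positive and bounded. -/
def Admissible {d : ℕ} (f : EuclideanSpace ℝ (Fin d) → EuclideanSpace ℝ (Fin d) → ℝ) : Prop :=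
  Continuous (fun p : EuclideanSpace ℝ (Fin d) × EuclideanSpace ℝ (Fin d) => f p.1 p.2) ∧
    (∀ z₁ z₂, 0 < f z₁ z₂) ∧
    BddAbove (Set.range fun p : EuclideanSpace ℝ (Fin d) × EuclideanSpace ℝ (Fin d) => f p.1 p.2)

/-- `(x, y)` is a global classical solution of the two-population delayed
Hegselmann–Krause system, with `k` (resp. `h`) leaders in the first (resp. second)
population and time delay `τ`. -/
structure IsSol {d N M : ℕ} (h k : ℕ) (τ : ℝ)
    (ψ ψs φ φs : EuclideanSpace ℝ (Fin d) → EuclideanSpace ℝ (Fin d) → ℝ)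
    (x : Fin N → ℝ → EuclideanSpace ℝ (Fin d))
    (y : Fin M → ℝ → EuclideanSpace ℝ (Fin d)) : Prop where
  contx : ∀ i, Continuous (x i)
  conty : ∀ j, Continuous (y j)
  odex_lead : ∀ i : Fin N, (i : ℕ) < k → ∀ t : ℝ, 0 < t →
    HasDerivAt (x i)
      ((∑ j ∈ Finset.univ.erase i,
          (ψ (x i t) (x j t) / ((N : ℝ) + h - 1)) • (x j t - x i t)) +
        ∑ j ∈ Finset.univ.filter (fun j : Fin M => (j : ℕ) < h),
          (φ (x i t) (y j (t - τ)) / ((N : ℝ) + h - 1)) • (y j (t - τ) - x i t)) t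
  odex_foll : ∀ i : Fin N, k ≤ (i : ℕ) → ∀ t : ℝ, 0 < t →
    HasDerivAt (x i)
      (∑ j ∈ Finset.univ.erase i,
          (ψ (x i t) (x j t) / ((N : ℝ) - 1)) • (x j t - x i t)) t
  odey_lead : ∀ i : Fin M, (i : ℕ) < h → ∀ t : ℝ, 0 < t →
    HasDerivAt (y i)
      ((∑ j ∈ Finset.univ.erase i,
          (ψs (y i t) (y j t) / ((M : ℝ) + k - 1)) • (y j t - y i t)) +
        ∑ j ∈ Finset.univ.filter (fun j : Fin N => (j : ℕ) < k),
          (φs (y i t) (x j (t - τ)) / ((M : ℝ) + k - 1)) • (x j (t - τ) - y i t)) t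
  odey_foll : ∀ i : Fin M, h ≤ (i : ℕ) → ∀ t : ℝ, 0 < t →
    HasDerivAt (y i)
      (∑ j ∈ Finset.univ.erase i,
          (ψs (y i t) (y j t) / ((M : ℝ) - 1)) • (y j t - y i t)) t

/-- `m_0` : the minimum of the projections on `v` of the initial data. -/
def mInit {d N M : ℕ} (h k : ℕ) (τ : ℝ) (v : EuclideanSpace ℝ (Fin d))
    (x : Fin N → ℝ → EuclideanSpace ℝ (Fin d))
    (y : Fin M → ℝ → EuclideanSpace ℝ (Fin d)) : ℝ :=
  min
    (min (⨅ p : {i : Fin N // (i : ℕ) < k} × (Icc (-τ) (0 : ℝ)), ⟪x p.1.1 (p.2 : ℝ), v⟫)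
         (⨅ i : {i : Fin N // k ≤ (i : ℕ)}, ⟪x i.1 0, v⟫))
    (min (⨅ p : {j : Fin M // (j : ℕ) < h} × (Icc (-τ) (0 : ℝ)), ⟪y p.1.1 (p.2 : ℝ), v⟫)
         (⨅ j : {j : Fin M // h ≤ (j : ℕ)}, ⟪y j.1 0, v⟫))

/-- `M_0` : the maximum of the projections on `v` of the initial data. -/
def MInit {d N M : ℕ} (h k : ℕ) (τ : ℝ) (v : EuclideanSpace ℝ (Fin d))
    (x : Fin N → ℝ → EuclideanSpace ℝ (Fin d))
    (y : Fin M → ℝ → EuclideanSpace ℝ (Fin d)) : ℝ :=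
  max
    (max (⨆ p : {i : Fin N // (i : ℕ) < k} × (Icc (-τ) (0 : ℝ)), ⟪x p.1.1 (p.2 : ℝ), v⟫)
         (⨆ i : {i : Fin N // k ≤ (i : ℕ)}, ⟪x i.1 0, v⟫))
    (max (⨆ p : {j : Fin M // (j : ℕ) < h} × (Icc (-τ) (0 : ℝ)), ⟪y p.1.1 (p.2 : ℝ), v⟫)
         (⨆ j : {j : Fin M // h ≤ (j : ℕ)}, ⟪y j.1 0, v⟫))

/-- `C_0` : the maximum of the norms of the initial data. -/
def Cinit {d N M : ℕ} (h k : ℕ) (τ : ℝ)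
    (x : Fin N → ℝ → EuclideanSpace ℝ (Fin d))
    (y : Fin M → ℝ → EuclideanSpace ℝ (Fin d)) : ℝ :=
  max
    (max (⨆ p : {i : Fin N // (i : ℕ) < k} × (Icc (-τ) (0 : ℝ)), ‖x p.1.1 (p.2 : ℝ)‖)
         (⨆ i : {i : Fin N // k ≤ (i : ℕ)}, ‖x i.1 0‖))
    (max (⨆ p : {j : Fin M // (j : ℕ) < h} × (Icc (-τ) (0 : ℝ)), ‖y p.1.1 (p.2 : ℝ)‖)
         (⨆ j : {j : Fin M // h ≤ (j : ℕ)}, ‖y j.1 0‖))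

/-- the minimum of an influence function on the ball of radius `C` (in each variable). -/
def minOnBall {d : ℕ} (C : ℝ)
    (f : EuclideanSpace ℝ (Fin d) → EuclideanSpace ℝ (Fin d) → ℝ) : ℝ :=
  ⨅ p : {z : EuclideanSpace ℝ (Fin d) × EuclideanSpace ℝ (Fin d) // ‖z.1‖ ≤ C ∧ ‖z.2‖ ≤ C},
    f p.1.1 p.1.2

/-- `Γ := min {ψ₀, ψ*₀, φ₀, φ*₀}`. -/
def Gam {d N M : ℕ} (h k : ℕ) (τ : ℝ)
    (ψ ψs φ φs : EuclideanSpace ℝ (Fin d) → EuclideanSpace ℝ (Fin d) → ℝ)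
    (x : Fin N → ℝ → EuclideanSpace ℝ (Fin d))
    (y : Fin M → ℝ → EuclideanSpace ℝ (Fin d)) : ℝ :=
  min (min (minOnBall (Cinit h k τ x y) ψ) (minOnBall (Cinit h k τ x y) ψs))
      (min (minOnBall (Cinit h k τ x y) φ) (minOnBall (Cinit h k τ x y) φs))

/-- `m_n` : minimum of the projections on `v` over the time mesh `I_n = [(6n-1)τ, 6nτ]`. -/
def mSeq {d N M : ℕ} (h k : ℕ) (τ : ℝ) (v : EuclideanSpace ℝ (Fin d))
    (x : Fin N → ℝ → EuclideanSpace ℝ (Fin d))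
    (y : Fin M → ℝ → EuclideanSpace ℝ (Fin d)) (n : ℕ) : ℝ :=
  min
    (min (⨅ p : {i : Fin N // (i : ℕ) < k} × (Icc ((6 * (n : ℝ) - 1) * τ) (6 * (n : ℝ) * τ)),
            ⟪x p.1.1 (p.2 : ℝ), v⟫)
         (⨅ i : {i : Fin N // k ≤ (i : ℕ)}, ⟪x i.1 (6 * (n : ℝ) * τ), v⟫))
    (min (⨅ p : {j : Fin M // (j : ℕ) < h} × (Icc ((6 * (n : ℝ) - 1) * τ) (6 * (n : ℝ) * τ)),
            ⟪y p.1.1 (p.2 : ℝ), v⟫)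
         (⨅ j : {j : Fin M // h ≤ (j : ℕ)}, ⟪y j.1 (6 * (n : ℝ) * τ), v⟫))

/-- `M_n` : maximum of the projections on `v` over the time mesh `I_n = [(6n-1)τ, 6nτ]`. -/
def MSeq {d N M : ℕ} (h k : ℕ) (τ : ℝ) (v : EuclideanSpace ℝ (Fin d))
    (x : Fin N → ℝ → EuclideanSpace ℝ (Fin d))
    (y : Fin M → ℝ → EuclideanSpace ℝ (Fin d)) (n : ℕ) : ℝ :=
  max
    (max (⨆ p : {i : Fin N // (i : ℕ) < k} × (Icc ((6 * (n : ℝ) - 1) * τ) (6 * (n : ℝ) * τ)),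
            ⟪x p.1.1 (p.2 : ℝ), v⟫)
         (⨆ i : {i : Fin N // k ≤ (i : ℕ)}, ⟪x i.1 (6 * (n : ℝ) * τ), v⟫))
    (max (⨆ p : {j : Fin M // (j : ℕ) < h} × (Icc ((6 * (n : ℝ) - 1) * τ) (6 * (n : ℝ) * τ)),
            ⟪y p.1.1 (p.2 : ℝ), v⟫)
         (⨆ j : {j : Fin M // h ≤ (j : ℕ)}, ⟪y j.1 (6 * (n : ℝ) * τ), v⟫))

/-!
Projected on `v`, every agent moves towards a nonnegative combination of the current projections
of its own population and of the delayed projections of the other population's leaders. So when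
the running maximum of all projections first reaches the barrier `M₀ + ε (1 + t)`, the agent
attaining it is not increasing, while the barrier is: a contradiction. Letting `ε → 0` gives the
upper bound; the lower bound is the upper bound for `-v`, since `m₀(v) = -M₀(-v)`.
-/

theorem HasDerivAt.nonneg_of_isLocalMaxOn_Iic {g : ℝ → ℝ} {D a : ℝ} (hg : HasDerivAt g D a)
    (hmax : IsLocalMaxOn g (Iic a) a) : 0 ≤ D := by
  have hdir : (-1 : ℝ) ∈ posTangentConeAt (Iic a) a :=
    mem_posTangentConeAt_of_segment_subset (by
      rw [segment_symm, segment_eq_Icc (by linarith)]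
      exact Icc_subset_Iic_self)
  simpa using hmax.hasFDerivWithinAt_nonpos hg.hasFDerivAt.hasFDerivWithinAt hdir

theorem le_of_exists_hasDerivAt_nonpos_of_runningMax {ι : Type*} [Finite ι] {u : ι → ℝ → ℝ}
    {B : ℝ} (hu : ∀ i, Continuous (u i)) (h0 : ∀ i, u i 0 ≤ B)
    (hmax : ∀ i t, 0 < t → B ≤ u i t → (∀ j, ∀ s ∈ Icc 0 t, u j s ≤ u i t) →
      ∃ D, HasDerivAt (u i) D t ∧ D ≤ 0) :
    ∀ i t, 0 ≤ t → u i t ≤ B := by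
  by_contra! ⟨i₁, t₁, ht₁, hBt₁⟩
  obtain ⟨ε, hε, hεt₁⟩ : ∃ ε > 0, B + ε * (1 + t₁) < u i₁ t₁ :=
    ⟨(u i₁ t₁ - B) / (2 * (1 + t₁)), by positivity, by field_simp; linarith⟩
  set b : ℝ → ℝ := fun s => B + ε * (1 + s) with hb
  set S : Set ℝ := {s | 0 ≤ s ∧ ∃ j, b s ≤ u j s}
  have hS : IsClosed S := by
    simp only [S, Set.ofPred_and, Set.ofPred_exists]
    exact isClosed_Ici.inter (isClosed_iUnion_of_finite fun j =>
      isClosed_le (by fun_prop) (hu j))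
  have hSbdd : BddBelow S := ⟨0, fun s hs => hs.1⟩
  have ht₀S : sInf S ∈ S := hS.csInf_mem ⟨t₁, ht₁, i₁, hεt₁.le⟩ hSbdd
  -- the first time some `u j` reaches the barrier `b`
  set t₀ := sInf S
  have hbelow : ∀ j, ∀ s ∈ Ico 0 t₀, u j s < b s := fun j s hs => by
    by_contra! hjs
    exact (notMem_of_lt_csInf hs.2 hSbdd) ⟨hs.1, j, hjs⟩
  have ht₀ : 0 < t₀ := by
    obtain ⟨ht₀, j, hj⟩ := ht₀S
    refine ht₀.lt_of_ne fun h => ?_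
    rw [← h] at hj
    linarith [h0 j, show b 0 = B + ε by simp [hb]]
  have : Nonempty ι := ⟨i₁⟩
  obtain ⟨i₀, hi₀⟩ := Finite.exists_max fun j => u j t₀
  have hbt₀ : b t₀ ≤ u i₀ t₀ := by
    obtain ⟨-, j, hj⟩ := ht₀S
    exact hj.trans (hi₀ j)
  have hb_mono : Monotone b := fun s s' hss' => by
    simp only [hb]; nlinarith
  have hrun : ∀ j, ∀ s ∈ Icc 0 t₀, u j s ≤ u i₀ t₀ := by
    intro j s hs
    rcases hs.2.lt_or_eq with hst | rfl
    · exact ((hbelow j s ⟨hs.1, hst⟩).trans_le (hb_mono hst.le)).le.trans hbt₀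
    · exact hi₀ j
  have hBb : B < b t₀ := by simp only [hb]; nlinarith
  obtain ⟨D, hD, hD0⟩ := hmax i₀ t₀ ht₀ (hBb.le.trans hbt₀) hrun
  have hgap : IsLocalMaxOn (fun s => u i₀ s - b s) (Iic t₀) t₀ := by
    filter_upwards [Ioc_mem_nhdsLE ht₀] with s hs
    rcases hs.2.lt_or_eq with hst | rfl
    · linarith [hbelow i₀ s ⟨hs.1.le, hst⟩]
    · exact le_rfl
  have hb' : HasDerivAt b (ε * 1) t₀ :=
    (((hasDerivAt_id t₀).const_add 1).const_mul ε).const_add B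
  linarith [(hD.sub hb').nonneg_of_isLocalMaxOn_Iic hgap]

theorem inner_sum_smul_sub_nonpos {E ι : Type*} [NormedAddCommGroup E] [InnerProductSpace ℝ E]
    (s : Finset ι) {c : ι → ℝ} {w : ι → E} {z v : E} (hc : ∀ j ∈ s, 0 ≤ c j)
    (hw : ∀ j ∈ s, ⟪w j, v⟫ ≤ ⟪z, v⟫) : ⟪∑ j ∈ s, c j • (w j - z), v⟫ ≤ 0 := by
  rw [sum_inner]
  refine Finset.sum_nonpos fun j hj => ?_
  rw [real_inner_smul_left, inner_sub_left]
  exact mul_nonpos_of_nonneg_of_nonpos (hc j hj) (sub_nonpos.2 (hw j hj))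

theorem bddAbove_range_prod_Icc {ι : Type*} [Finite ι] {f : ι → ℝ → ℝ} {a b : ℝ}
    (hf : ∀ i, ContinuousOn (f i) (Icc a b)) :
    BddAbove (range fun p : ι × Icc a b => f p.1 p.2) := by
  refine (finite_univ.bddAbove_biUnion.2 fun i _ =>
    (isCompact_Icc.image_of_continuousOn (hf i)).bddAbove).mono ?_
  rintro _ ⟨⟨i, s, hs⟩, rfl⟩
  exact mem_biUnion (mem_univ i) ⟨s, hs, rfl⟩

theorem HasDerivAt.inner_const {E : Type*} [NormedAddCommGroup E] [InnerProductSpace ℝ E]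
    {f : ℝ → E} {f' : E} {t : ℝ} (hf : HasDerivAt f f' t) (v : E) :
    HasDerivAt (fun s => ⟪f s, v⟫) ⟪f', v⟫ t := by
  simpa using hf.inner ℝ (hasDerivAt_const t v)

theorem Real.iSup_neg_eq_neg_iInf {ι : Sort*} (f : ι → ℝ) : ⨆ i, -f i = -⨅ i, f i := by
  simpa using (Real.mul_iInf_of_nonpos (r := -1) (by norm_num) f).symm

section Solution

variable {d N M h k : ℕ} {τ : ℝ}
  {ψ ψs φ φs : EuclideanSpace ℝ (Fin d) → EuclideanSpace ℝ (Fin d) → ℝ}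
  {x : Fin N → ℝ → EuclideanSpace ℝ (Fin d)} {y : Fin M → ℝ → EuclideanSpace ℝ (Fin d)}

theorem IsSol.swap (hsol : IsSol h k τ ψ ψs φ φs x y) : IsSol k h τ ψs ψ φs φ y x :=
  ⟨hsol.conty, hsol.contx, hsol.odey_lead, hsol.odey_foll, hsol.odex_lead, hsol.odex_foll⟩

theorem MInit_swap (v : EuclideanSpace ℝ (Fin d)) : MInit k h τ v y x = MInit h k τ v x y :=
  max_comm _ _

theorem mInit_eq_neg_MInit_neg (v : EuclideanSpace ℝ (Fin d)) :
    mInit h k τ v x y = -MInit h k τ (-v) x y := by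
  simp only [mInit, MInit, inner_neg_right, Real.iSup_neg_eq_neg_iInf, max_neg_neg, neg_neg]

theorem inner_le_MInit_of_lt (hx : ∀ i, Continuous (x i)) (v : EuclideanSpace ℝ (Fin d))
    {i : Fin N} (hi : (i : ℕ) < k) {t : ℝ} (ht : t ∈ Icc (-τ) 0) :
    ⟪x i t, v⟫ ≤ MInit h k τ v x y :=
  (le_ciSup (bddAbove_range_prod_Icc fun i : {i : Fin N // (i : ℕ) < k} =>
      ((hx i).inner continuous_const).continuousOn)
    ((⟨⟨i, hi⟩, ⟨t, ht⟩⟩ : {i : Fin N // (i : ℕ) < k} × Icc (-τ) (0 : ℝ)))).trans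
    ((le_max_left _ _).trans (le_max_left _ _))

theorem inner_le_MInit_of_le (v : EuclideanSpace ℝ (Fin d)) {i : Fin N} (hi : k ≤ (i : ℕ)) :
    ⟪x i 0, v⟫ ≤ MInit h k τ v x y :=
  (le_ciSup (f := fun i : {i : Fin N // k ≤ (i : ℕ)} => ⟪x i.1 0, v⟫) (finite_range _).bddAbove
    ⟨i, hi⟩).trans
    ((le_max_right _ _).trans (le_max_left _ _))

theorem inner_le_MInit_zero (hx : ∀ i, Continuous (x i)) (hτ : 0 ≤ τ)
    (v : EuclideanSpace ℝ (Fin d)) (i : Fin N) : ⟪x i 0, v⟫ ≤ MInit h k τ v x y := by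
  rcases lt_or_ge (i : ℕ) k with hi | hi
  · exact inner_le_MInit_of_lt hx v hi ⟨by linarith, le_rfl⟩
  · exact inner_le_MInit_of_le v hi

theorem IsSol.exists_hasDerivAt_inner_nonpos (hsol : IsSol h k τ ψ ψs φ φs x y) (hτ : 0 ≤ τ)
    (hψ : ∀ z w, 0 ≤ ψ z w) (hφ : ∀ z w, 0 ≤ φ z w) {v : EuclideanSpace ℝ (Fin d)} {B : ℝ}
    (hhist : ∀ j : Fin M, (j : ℕ) < h → ∀ s ∈ Icc (-τ) 0, ⟪y j s, v⟫ ≤ B)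
    {i : Fin N} {t : ℝ} (ht : 0 < t) (hBi : B ≤ ⟪x i t, v⟫)
    (hx : ∀ j, ∀ s ∈ Icc 0 t, ⟪x j s, v⟫ ≤ ⟪x i t, v⟫)
    (hy : ∀ j, ∀ s ∈ Icc 0 t, ⟪y j s, v⟫ ≤ ⟪x i t, v⟫) :
    ∃ D, HasDerivAt (fun s => ⟪x i s, v⟫) D t ∧ D ≤ 0 := by
  have hN : (1 : ℝ) ≤ N := by exact_mod_cast i.pos
  have hxt : ∀ j, ⟪x j t, v⟫ ≤ ⟪x i t, v⟫ := fun j => hx j t ⟨ht.le, le_rfl⟩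
  rcases lt_or_ge (i : ℕ) k with hi | hi
  · have hdelay : ∀ j : Fin M, (j : ℕ) < h → ⟪y j (t - τ), v⟫ ≤ ⟪x i t, v⟫ := by
      intro j hj
      rcases le_or_gt 0 (t - τ) with hs | hs
      · exact hy j _ ⟨hs, by linarith⟩
      · exact (hhist j hj _ ⟨by linarith, hs.le⟩).trans hBi
    have hden : (0 : ℝ) ≤ N + h - 1 := by linarith [(h.cast_nonneg : (0 : ℝ) ≤ h)]
    refine ⟨_, (hsol.odex_lead i hi t ht).inner_const v, ?_⟩
    rw [inner_add_left]
    exact add_nonpos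
      (inner_sum_smul_sub_nonpos _ (fun j _ => div_nonneg (hψ _ _) hden) fun j _ => hxt j)
      (inner_sum_smul_sub_nonpos _ (fun j _ => div_nonneg (hφ _ _) hden) fun j hj =>
        hdelay j (Finset.mem_filter.1 hj).2)
  · exact ⟨_, (hsol.odex_foll i hi t ht).inner_const v,
      inner_sum_smul_sub_nonpos _ (fun j _ => div_nonneg (hψ _ _) (by linarith)) fun j _ => hxt j⟩

theorem IsSol.inner_le_MInit_of_nonneg (hsol : IsSol h k τ ψ ψs φ φs x y) (hτ : 0 ≤ τ)
    (hψ : ∀ z w, 0 ≤ ψ z w) (hψs : ∀ z w, 0 ≤ ψs z w) (hφ : ∀ z w, 0 ≤ φ z w)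
    (hφs : ∀ z w, 0 ≤ φs z w) (v : EuclideanSpace ℝ (Fin d)) :
    (∀ i t, 0 ≤ t → ⟪x i t, v⟫ ≤ MInit h k τ v x y) ∧
      ∀ j t, 0 ≤ t → ⟪y j t, v⟫ ≤ MInit h k τ v x y := by
  have hxhist : ∀ i : Fin N, (i : ℕ) < k → ∀ s ∈ Icc (-τ) 0, ⟪x i s, v⟫ ≤ MInit h k τ v x y :=
    fun i hi s hs => inner_le_MInit_of_lt hsol.contx v hi hs
  have hyhist : ∀ j : Fin M, (j : ℕ) < h → ∀ s ∈ Icc (-τ) 0, ⟪y j s, v⟫ ≤ MInit h k τ v x y :=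
    fun j hj s hs => MInit_swap (τ := τ) v ▸ inner_le_MInit_of_lt hsol.conty v hj hs
  have hbound := le_of_exists_hasDerivAt_nonpos_of_runningMax
    (u := Sum.elim (fun i t => ⟪x i t, v⟫) (fun j t => ⟪y j t, v⟫)) (B := MInit h k τ v x y)
    (by
      rintro (i | j)
      · exact (hsol.contx i).inner continuous_const
      · exact (hsol.conty j).inner continuous_const)
    (by
      rintro (i | j)
      · exact inner_le_MInit_zero hsol.contx hτ v i
      · exact MInit_swap (τ := τ) v ▸ inner_le_MInit_zero hsol.conty hτ v j)
    (by
      rintro (i | j) t ht hB hrun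
      · exact hsol.exists_hasDerivAt_inner_nonpos hτ hψ hφ hyhist ht hB
          (fun j => hrun (.inl j)) (fun j => hrun (.inr j))
      · exact hsol.swap.exists_hasDerivAt_inner_nonpos hτ hψs hφs hxhist ht hB
          (fun j => hrun (.inr j)) (fun j => hrun (.inl j)))
  exact ⟨fun i => hbound (.inl i), fun j => hbound (.inr j)⟩

theorem IsSol.inner_le_MInit (hsol : IsSol h k τ ψ ψs φ φs x y) (hτ : 0 ≤ τ)
    (hψ : ∀ z w, 0 ≤ ψ z w) (hψs : ∀ z w, 0 ≤ ψs z w) (hφ : ∀ z w, 0 ≤ φ z w)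
    (hφs : ∀ z w, 0 ≤ φs z w) (v : EuclideanSpace ℝ (Fin d)) :
    (∀ i : Fin N, (i : ℕ) < k → ∀ t : ℝ, -τ ≤ t → ⟪x i t, v⟫ ≤ MInit h k τ v x y) ∧
      (∀ i : Fin N, k ≤ (i : ℕ) → ∀ t : ℝ, 0 ≤ t → ⟪x i t, v⟫ ≤ MInit h k τ v x y) ∧
      (∀ j : Fin M, (j : ℕ) < h → ∀ t : ℝ, -τ ≤ t → ⟪y j t, v⟫ ≤ MInit h k τ v x y) ∧
      (∀ j : Fin M, h ≤ (j : ℕ) → ∀ t : ℝ, 0 ≤ t → ⟪y j t, v⟫ ≤ MInit h k τ v x y) := by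
  obtain ⟨hx, hy⟩ := hsol.inner_le_MInit_of_nonneg hτ hψ hψs hφ hφs v
  refine ⟨fun i hi t ht => ?_, fun i _ => hx i, fun j hj t ht => ?_, fun j _ => hy j⟩
  · rcases le_or_gt t 0 with ht0 | ht0
    · exact inner_le_MInit_of_lt hsol.contx v hi ⟨ht, ht0⟩
    · exact hx i t ht0.le
  · rcases le_or_gt t 0 with ht0 | ht0
    · exact MInit_swap (τ := τ) v ▸ inner_le_MInit_of_lt hsol.conty v hj ⟨ht, ht0⟩
    · exact hy j t ht0.le

end Solution

theorem stmt0_general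
    (d N M h k : ℕ)
    (τ : ℝ) (hτ : 0 < τ)
    (ψ ψs φ φs : EuclideanSpace ℝ (Fin d) → EuclideanSpace ℝ (Fin d) → ℝ)
    (hψ : Admissible ψ) (hψs : Admissible ψs) (hφ : Admissible φ) (hφs : Admissible φs)
    (x : Fin N → ℝ → EuclideanSpace ℝ (Fin d)) (y : Fin M → ℝ → EuclideanSpace ℝ (Fin d))
    (hsol : IsSol h k τ ψ ψs φ φs x y)
    :
    ∀ v : EuclideanSpace ℝ (Fin d),
      (∀ i : Fin N, (i : ℕ) < k → ∀ t : ℝ, -τ ≤ t →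
        mInit h k τ v x y ≤ ⟪x i t, v⟫ ∧ ⟪x i t, v⟫ ≤ MInit h k τ v x y) ∧
      (∀ i : Fin N, k ≤ (i : ℕ) → ∀ t : ℝ, 0 ≤ t →
        mInit h k τ v x y ≤ ⟪x i t, v⟫ ∧ ⟪x i t, v⟫ ≤ MInit h k τ v x y) ∧
      (∀ j : Fin M, (j : ℕ) < h → ∀ t : ℝ, -τ ≤ t →
        mInit h k τ v x y ≤ ⟪y j t, v⟫ ∧ ⟪y j t, v⟫ ≤ MInit h k τ v x y) ∧
      (∀ j : Fin M, h ≤ (j : ℕ) → ∀ t : ℝ, 0 ≤ t →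
        mInit h k τ v x y ≤ ⟪y j t, v⟫ ∧ ⟪y j t, v⟫ ≤ MInit h k τ v x y) := by
  intro v
  have upper := hsol.inner_le_MInit hτ.le (fun _ _ => (hψ.2.1 _ _).le)
    (fun _ _ => (hψs.2.1 _ _).le) (fun _ _ => (hφ.2.1 _ _).le) (fun _ _ => (hφs.2.1 _ _).le)
  have lower {z : EuclideanSpace ℝ (Fin d)} (hz : ⟪z, -v⟫ ≤ MInit h k τ (-v) x y) :
      mInit h k τ v x y ≤ ⟪z, v⟫ := by
    rw [mInit_eq_neg_MInit_neg, neg_le]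
    rwa [inner_neg_right] at hz
  obtain ⟨hx₁, hx₂, hy₁, hy₂⟩ := upper v
  obtain ⟨hx₁', hx₂', hy₁', hy₂'⟩ := upper (-v)
  exact ⟨fun i hi t ht => ⟨lower (hx₁' i hi t ht), hx₁ i hi t ht⟩,
    fun i hi t ht => ⟨lower (hx₂' i hi t ht), hx₂ i hi t ht⟩,
    fun j hj t ht => ⟨lower (hy₁' j hj t ht), hy₁ j hj t ht⟩,
    fun j hj t ht => ⟨lower (hy₂' j hj t ht), hy₂ j hj t ht⟩⟩

theorem stmt0
    (d N M h k : ℕ) (hd : 1 ≤ d) (hN : 2 ≤ N) (hM2 : 2 ≤ M) (hMN : M ≤ N)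
    (hh1 : 1 ≤ h) (hhM : h < M) (hk1 : 1 ≤ k) (hkN : k < N)
    (τ : ℝ) (hτ : 0 < τ)
    (ψ ψs φ φs : EuclideanSpace ℝ (Fin d) → EuclideanSpace ℝ (Fin d) → ℝ)
    (hψ : Admissible ψ) (hψs : Admissible ψs) (hφ : Admissible φ) (hφs : Admissible φs)
    (x : Fin N → ℝ → EuclideanSpace ℝ (Fin d)) (y : Fin M → ℝ → EuclideanSpace ℝ (Fin d))
    (hsol : IsSol h k τ ψ ψs φ φs x y)
    :
    ∀ v : EuclideanSpace ℝ (Fin d),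
      (∀ i : Fin N, (i : ℕ) < k → ∀ t : ℝ, -τ ≤ t →
        mInit h k τ v x y ≤ ⟪x i t, v⟫ ∧ ⟪x i t, v⟫ ≤ MInit h k τ v x y) ∧
      (∀ i : Fin N, k ≤ (i : ℕ) → ∀ t : ℝ, 0 ≤ t →
        mInit h k τ v x y ≤ ⟪x i t, v⟫ ∧ ⟪x i t, v⟫ ≤ MInit h k τ v x y) ∧
      (∀ j : Fin M, (j : ℕ) < h → ∀ t : ℝ, -τ ≤ t →
        mInit h k τ v x y ≤ ⟪y j t, v⟫ ∧ ⟪y j t, v⟫ ≤ MInit h k τ v x y) ∧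
      (∀ j : Fin M, h ≤ (j : ℕ) → ∀ t : ℝ, 0 ≤ t →
        mInit h k τ v x y ≤ ⟪y j t, v⟫ ∧ ⟪y j t, v⟫ ≤ MInit h k τ v x y) :=
  stmt0_general d N M h k τ hτ ψ ψs φ φs hψ hψs hφ hφs x y hsol
end
end

section
/- The solution is uniformly bounded by its initial data: |x_i(t)| ≤ C_0 and |y_j(t)| ≤ C_0, for all t ≥ −τ when i = 1,…,k and j = 1,…,h, and for all t ≥ 0 when i = k+1,…,N and j = h+1,…,M. -/
open Real Set Filter Topology
open scoped BigOperators RealInnerProductSpace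

noncomputable section

/-! Fix `R > C₀`. As long as every agent, and every delayed leader, lies in the ball of radius
`R`, each agent `u` satisfies `⟪u', u⟫ ≤ Λ (R² - ‖u‖²)`: every term of its equation pulls it
towards a point of the ball, and the weights sum to at most `Λ` because the normalising factor
counts the terms. Hence `(‖u‖² - R²) e^{2Λt}` is nonincreasing and `u` stays strictly inside the
ball. A continuous induction on `[0, ∞)` then keeps all agents inside for all time; let `R ↓ C₀`. -/

section ContinuousInduction

variable {α : Type*} [ConditionallyCompleteLinearOrder α] [TopologicalSpace α] [OrderTopology α]

theorem Ici_subset_of_forall_Ico_subset_imp_mem {U : Set α} (hU : IsOpen U) (a : α)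
    (hstep : ∀ T, a ≤ T → Ico a T ⊆ U → T ∈ U) : Ici a ⊆ U := by
  by_contra hsub
  have hbdd : BddBelow (Ici a \ U) := ⟨a, fun t ht => ht.1⟩
  have hinf : sInf (Ici a \ U) ∈ Ici a \ U :=
    (isClosed_Ici.sdiff hU).csInf_mem (Set.sdiff_nonempty.mpr hsub) hbdd
  refine hinf.2 (hstep _ hinf.1 fun s hs => ?_)
  by_contra hsU
  exact (csInf_le hbdd ⟨hs.1, hsU⟩).not_gt hs.2

end ContinuousInduction

section InnerProductSpace

variable {E : Type*} [NormedAddCommGroup E] [InnerProductSpace ℝ E]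

theorem norm_lt_of_inner_deriv_le {u : ℝ → E} {K R T : ℝ} (hT : 0 ≤ T)
    (hu : ContinuousOn u (Icc 0 T))
    (hderiv : ∀ s ∈ Ioo 0 T, ∃ v, HasDerivAt u v s ∧ ⟪v, u s⟫ ≤ K * (R ^ 2 - ‖u s‖ ^ 2))
    (h0 : ‖u 0‖ < R) : ‖u T‖ < R := by
  choose! u' hu' hinner using hderiv
  set g : ℝ → ℝ := fun s => (‖u s‖ ^ 2 - R ^ 2) * exp (2 * K * s)
  have hg : AntitoneOn g (Icc 0 T) := by
    refine antitoneOn_of_hasDerivWithinAt_nonpos (convex_Icc 0 T)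
      (((hu.norm.pow 2).sub continuousOn_const).mul (by fun_prop))
      (f' := fun s => (2 * ⟪u' s, u s⟫ + 2 * K * (‖u s‖ ^ 2 - R ^ 2)) * exp (2 * K * s))
      (fun s hs => ?_) (fun s hs => ?_) <;> rw [interior_Icc] at hs
    · have he : HasDerivAt (fun s => exp (2 * K * s)) (exp (2 * K * s) * (2 * K)) s := by
        simpa using ((hasDerivAt_id s).const_mul (2 * K)).exp
      refine (((hu' s hs).norm_sq.sub_const (R ^ 2)).mul he).hasDerivWithinAt.congr_deriv ?_
      rw [real_inner_comm]
      ring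
    · exact mul_nonpos_of_nonpos_of_nonneg (by linarith [hinner s hs]) (exp_pos _).le
  have hR : 0 ≤ R := (norm_nonneg _).trans h0.le
  have hg0 : g 0 < 0 := by
    simp only [g, mul_zero, exp_zero, mul_one, sub_neg]
    exact pow_lt_pow_left₀ h0 (norm_nonneg _) two_ne_zero
  have hgT : g T < 0 := (hg ⟨le_rfl, hT⟩ ⟨hT, le_rfl⟩ hT).trans_lt hg0
  have hsq : ‖u T‖ ^ 2 < R ^ 2 := sub_neg.mp (neg_of_mul_neg_left hgT (exp_pos _).le)
  exact lt_of_pow_lt_pow_left₀ 2 hR hsq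

theorem inner_sum_smul_sub_le {ι : Type*} (s : Finset ι) {c : ι → ℝ} {w : ι → E} {u : E}
    {R : ℝ} (hc : ∀ j ∈ s, 0 ≤ c j) (hw : ∀ j ∈ s, ‖w j‖ ≤ R) (hu : ‖u‖ ≤ R) :
    ⟪∑ j ∈ s, c j • (w j - u), u⟫ ≤ (∑ j ∈ s, c j) * (R ^ 2 - ‖u‖ ^ 2) := by
  rw [sum_inner, Finset.sum_mul]
  refine Finset.sum_le_sum fun j hj => ?_
  rw [real_inner_smul_left, inner_sub_left, real_inner_self_eq_norm_sq]
  have hwu : ⟪w j, u⟫ ≤ R ^ 2 :=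
    (real_inner_le_norm _ _).trans (by nlinarith [hw j hj, norm_nonneg (w j), norm_nonneg u])
  exact mul_le_mul_of_nonneg_left (by linarith) (hc j hj)

theorem sum_div_le_mul_card_div {ι : Type*} (s : Finset ι) {a : ι → ℝ} {Λ D : ℝ}
    (ha : ∀ j ∈ s, a j ≤ Λ) (hD : 0 ≤ D) : ∑ j ∈ s, a j / D ≤ Λ * s.card / D := by
  rw [← Finset.sum_div]
  gcongr
  simpa [nsmul_eq_mul, mul_comm] using Finset.sum_le_card_nsmul s a Λ ha

theorem inner_sum_div_smul_sub_le {ι : Type*} (s : Finset ι) {a : ι → ℝ} {w : ι → E} {u : E}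
    {Λ D R : ℝ} (ha₀ : ∀ j ∈ s, 0 ≤ a j) (haΛ : ∀ j ∈ s, a j ≤ Λ) (hD : 0 ≤ D)
    (hw : ∀ j ∈ s, ‖w j‖ ≤ R) (hu : ‖u‖ ≤ R) :
    ⟪∑ j ∈ s, (a j / D) • (w j - u), u⟫ ≤ Λ * s.card / D * (R ^ 2 - ‖u‖ ^ 2) :=
  (inner_sum_smul_sub_le s (fun j hj => div_nonneg (ha₀ j hj) hD) hw hu).trans <|
    mul_le_mul_of_nonneg_right (sum_div_le_mul_card_div s haΛ hD)
      (by nlinarith [norm_nonneg u])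

end InnerProductSpace

section HegselmannKrause

variable {d N M h k : ℕ} {τ : ℝ}
  {ψ ψs φ φs : EuclideanSpace ℝ (Fin d) → EuclideanSpace ℝ (Fin d) → ℝ}
  {x : Fin N → ℝ → EuclideanSpace ℝ (Fin d)} {y : Fin M → ℝ → EuclideanSpace ℝ (Fin d)}

theorem Cinit_swap : Cinit k h τ y x = Cinit h k τ x y := max_comm _ _

theorem norm_le_Cinit_of_lt (hx : ∀ i, Continuous (x i)) {i : Fin N} (hi : (i : ℕ) < k)
    {t : ℝ} (ht : t ∈ Icc (-τ) 0) : ‖x i t‖ ≤ Cinit h k τ x y :=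
  (le_ciSup (f := fun p : {i : Fin N // (i : ℕ) < k} × Icc (-τ) (0 : ℝ) => ‖x p.1.1 p.2‖)
      (isCompact_range (continuous_prod_of_discrete_left.mpr fun i =>
        (hx i.1).norm.comp continuous_subtype_val)).bddAbove ⟨⟨i, hi⟩, ⟨t, ht⟩⟩).trans
    (le_max_of_le_left (le_max_left _ _))

theorem norm_le_Cinit_of_le {i : Fin N} (hi : k ≤ (i : ℕ)) : ‖x i 0‖ ≤ Cinit h k τ x y :=
  (le_ciSup (f := fun i : {i : Fin N // k ≤ (i : ℕ)} => ‖x i.1 0‖) (Set.finite_range _).bddAbove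
      ⟨i, hi⟩).trans
    (le_max_of_le_left (le_max_right _ _))

theorem norm_zero_le_Cinit (hx : ∀ i, Continuous (x i)) (hτ : 0 ≤ τ) (i : Fin N) :
    ‖x i 0‖ ≤ Cinit h k τ x y := by
  rcases lt_or_ge (i : ℕ) k with hi | hi
  · exact norm_le_Cinit_of_lt hx hi ⟨by linarith, le_rfl⟩
  · exact norm_le_Cinit_of_le hi

theorem IsSol.exists_hasDerivAt_inner_le (hsol : IsSol h k τ ψ ψs φ φs x y)
    (hψ : ∀ z w, 0 < ψ z w) (hφ : ∀ z w, 0 < φ z w) {Λ : ℝ} (hψΛ : ∀ z w, ψ z w ≤ Λ)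
    (hφΛ : ∀ z w, φ z w ≤ Λ) {R s : ℝ} (hs : 0 < s) (hx : ∀ j, ‖x j s‖ ≤ R)
    (hy : ∀ j : Fin M, (j : ℕ) < h → ‖y j (s - τ)‖ ≤ R) (i : Fin N) :
    ∃ v, HasDerivAt (x i) v s ∧ ⟪v, x i s⟫ ≤ Λ * (R ^ 2 - ‖x i s‖ ^ 2) := by
  have hΛ : 0 ≤ Λ := (hψ (x i s) (x i s)).le.trans (hψΛ _ _)
  have hgap : 0 ≤ R ^ 2 - ‖x i s‖ ^ 2 := by nlinarith [hx i, norm_nonneg (x i s)]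
  have hN : (1 : ℝ) ≤ N := by exact_mod_cast i.pos
  have hcard : ((Finset.univ.erase i).card : ℝ) = N - 1 := by
    rw [Finset.card_erase_of_mem (Finset.mem_univ i), Finset.card_univ, Fintype.card_fin,
      Nat.cast_pred i.pos]
  have hintra := fun D (hD : 0 ≤ D) => inner_sum_div_smul_sub_le (Finset.univ.erase i)
    (fun j _ => (hψ (x i s) (x j s)).le) (fun j _ => hψΛ _ _) hD (fun j _ => hx j) (hx i)
  rcases lt_or_ge (i : ℕ) k with hi | hi
  · refine ⟨_, hsol.odex_lead i hi s hs, ?_⟩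
    have hD : (0 : ℝ) ≤ N + h - 1 := by linarith [(h.cast_nonneg : (0 : ℝ) ≤ h)]
    have hcard' : ((Finset.univ.filter fun j : Fin M => (j : ℕ) < h).card : ℝ) ≤ h := by
      exact_mod_cast Fin.card_filter_val_lt.trans_le (min_le_right _ _)
    have hinter := inner_sum_div_smul_sub_le (Finset.univ.filter fun j : Fin M => (j : ℕ) < h)
      (fun j _ => (hφ (x i s) (y j (s - τ))).le) (fun j _ => hφΛ _ _) hD
      (fun j hj => hy j (Finset.mem_filter.mp hj).2) (hx i)
    rw [inner_add_left]
    refine (add_le_add (hintra _ hD) hinter).trans ?_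
    rw [← add_mul, hcard]
    refine mul_le_mul_of_nonneg_right ?_ hgap
    rw [← add_div, ← mul_add]
    exact div_le_of_le_mul₀ hD hΛ (mul_le_mul_of_nonneg_left (by linarith) hΛ)
  · refine ⟨_, hsol.odex_foll i hi s hs, ?_⟩
    refine (hintra (N - 1) (by linarith)).trans (mul_le_mul_of_nonneg_right ?_ hgap)
    rw [hcard]
    exact div_le_of_le_mul₀ (by linarith) hΛ le_rfl

theorem IsSol.norm_lt_of_forall_Ico (hsol : IsSol h k τ ψ ψs φ φs x y)
    (hψ : ∀ z w, 0 < ψ z w) (hφ : ∀ z w, 0 < φ z w) {Λ : ℝ} (hψΛ : ∀ z w, ψ z w ≤ Λ)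
    (hφΛ : ∀ z w, φ z w ≤ Λ) (hτ : 0 < τ) {R T : ℝ} (hCR : Cinit h k τ x y < R) (hT : 0 ≤ T)
    (hbound : ∀ s ∈ Ico 0 T, (∀ j, ‖x j s‖ < R) ∧ ∀ j, ‖y j s‖ < R) (i : Fin N) :
    ‖x i T‖ < R := by
  have hdelay : ∀ s ∈ Ioo 0 T, ∀ j : Fin M, (j : ℕ) < h → ‖y j (s - τ)‖ ≤ R := by
    intro s hs j hj
    rcases le_or_gt (s - τ) 0 with hle | hpos
    · exact ((norm_le_Cinit_of_lt hsol.conty hj ⟨by linarith [hs.1], hle⟩).trans_eq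
        Cinit_swap).trans hCR.le
    · exact ((hbound _ ⟨hpos.le, by linarith [hs.2]⟩).2 j).le
  exact norm_lt_of_inner_deriv_le hT (hsol.contx i).continuousOn
    (fun s hs => hsol.exists_hasDerivAt_inner_le hψ hφ hψΛ hφΛ hs.1
      (fun j => ((hbound s ⟨hs.1.le, hs.2⟩).1 j).le) (hdelay s hs) i)
    ((norm_zero_le_Cinit hsol.contx hτ.le i).trans_lt hCR)

theorem Admissible.le_iSup {f : EuclideanSpace ℝ (Fin d) → EuclideanSpace ℝ (Fin d) → ℝ}
    (hf : Admissible f) (z w : EuclideanSpace ℝ (Fin d)) :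
    f z w ≤ ⨆ p : EuclideanSpace ℝ (Fin d) × EuclideanSpace ℝ (Fin d), f p.1 p.2 :=
  le_ciSup hf.2.2 (z, w)

theorem IsSol.norm_lt_of_Cinit_lt (hsol : IsSol h k τ ψ ψs φ φs x y) (hψ : Admissible ψ)
    (hψs : Admissible ψs) (hφ : Admissible φ) (hφs : Admissible φs) (hτ : 0 < τ) {R : ℝ}
    (hCR : Cinit h k τ x y < R) {t : ℝ} (ht : 0 ≤ t) :
    (∀ i, ‖x i t‖ < R) ∧ ∀ j, ‖y j t‖ < R := by
  have hU : IsOpen {t | (∀ i, ‖x i t‖ < R) ∧ ∀ j, ‖y j t‖ < R} := by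
    simp only [Set.ofPred_and, Set.ofPred_forall]
    exact (isOpen_iInter_of_finite fun i => isOpen_lt (hsol.contx i).norm continuous_const).inter
      (isOpen_iInter_of_finite fun j => isOpen_lt (hsol.conty j).norm continuous_const)
  refine Ici_subset_of_forall_Ico_subset_imp_mem hU 0
    (fun T hT hIco => ⟨fun i => ?_, fun j => ?_⟩) ht
  · exact hsol.norm_lt_of_forall_Ico hψ.2.1 hφ.2.1 (Λ := Lam ψ ψs φ φs)
      (fun z w => (hψ.le_iSup z w).trans (le_max_of_le_left (le_max_left _ _)))
      (fun z w => (hφ.le_iSup z w).trans (le_max_of_le_right (le_max_left _ _)))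
      hτ hCR hT hIco i
  · exact hsol.swap.norm_lt_of_forall_Ico hψs.2.1 hφs.2.1 (Λ := Lam ψ ψs φ φs)
      (fun z w => (hψs.le_iSup z w).trans (le_max_of_le_left (le_max_right _ _)))
      (fun z w => (hφs.le_iSup z w).trans (le_max_of_le_right (le_max_right _ _)))
      hτ (Cinit_swap.trans_lt hCR) hT (fun s hs => (hIco hs).symm) j

theorem IsSol.norm_le_Cinit (hsol : IsSol h k τ ψ ψs φ φs x y) (hψ : Admissible ψ)
    (hψs : Admissible ψs) (hφ : Admissible φ) (hφs : Admissible φs) (hτ : 0 < τ) :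
    (∀ i : Fin N, (i : ℕ) < k → ∀ t : ℝ, -τ ≤ t → ‖x i t‖ ≤ Cinit h k τ x y) ∧
    (∀ i : Fin N, k ≤ (i : ℕ) → ∀ t : ℝ, 0 ≤ t → ‖x i t‖ ≤ Cinit h k τ x y) := by
  have hpos : ∀ i t, 0 ≤ t → ‖x i t‖ ≤ Cinit h k τ x y := fun i t ht =>
    le_of_forall_pos_lt_add fun ε hε =>
      (hsol.norm_lt_of_Cinit_lt hψ hψs hφ hφs hτ (lt_add_of_pos_right _ hε) ht).1 i
  refine ⟨fun i hi t ht => ?_, fun i _ t ht => hpos i t ht⟩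
  rcases le_or_gt t 0 with ht0 | ht0
  · exact norm_le_Cinit_of_lt hsol.contx hi ⟨ht, ht0⟩
  · exact hpos i t ht0.le

end HegselmannKrause

theorem stmt1_general
    (d N M h k : ℕ)
    (τ : ℝ) (hτ : 0 < τ)
    (ψ ψs φ φs : EuclideanSpace ℝ (Fin d) → EuclideanSpace ℝ (Fin d) → ℝ)
    (hψ : Admissible ψ) (hψs : Admissible ψs) (hφ : Admissible φ) (hφs : Admissible φs)
    (x : Fin N → ℝ → EuclideanSpace ℝ (Fin d)) (y : Fin M → ℝ → EuclideanSpace ℝ (Fin d))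
    (hsol : IsSol h k τ ψ ψs φ φs x y)
    :
    (∀ i : Fin N, (i : ℕ) < k → ∀ t : ℝ, -τ ≤ t → ‖x i t‖ ≤ Cinit h k τ x y) ∧
    (∀ i : Fin N, k ≤ (i : ℕ) → ∀ t : ℝ, 0 ≤ t → ‖x i t‖ ≤ Cinit h k τ x y) ∧
    (∀ j : Fin M, (j : ℕ) < h → ∀ t : ℝ, -τ ≤ t → ‖y j t‖ ≤ Cinit h k τ x y) ∧
    (∀ j : Fin M, h ≤ (j : ℕ) → ∀ t : ℝ, 0 ≤ t → ‖y j t‖ ≤ Cinit h k τ x y) := by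
  obtain ⟨hx_lead, hx_foll⟩ := hsol.norm_le_Cinit hψ hψs hφ hφs hτ
  obtain ⟨hy_lead, hy_foll⟩ := hsol.swap.norm_le_Cinit hψs hψ hφs hφ hτ
  rw [Cinit_swap] at hy_lead hy_foll
  exact ⟨hx_lead, hx_foll, hy_lead, hy_foll⟩

theorem stmt1
    (d N M h k : ℕ) (hd : 1 ≤ d) (hN : 2 ≤ N) (hM2 : 2 ≤ M) (hMN : M ≤ N)
    (hh1 : 1 ≤ h) (hhM : h < M) (hk1 : 1 ≤ k) (hkN : k < N)
    (τ : ℝ) (hτ : 0 < τ)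
    (ψ ψs φ φs : EuclideanSpace ℝ (Fin d) → EuclideanSpace ℝ (Fin d) → ℝ)
    (hψ : Admissible ψ) (hψs : Admissible ψs) (hφ : Admissible φ) (hφs : Admissible φs)
    (x : Fin N → ℝ → EuclideanSpace ℝ (Fin d)) (y : Fin M → ℝ → EuclideanSpace ℝ (Fin d))
    (hsol : IsSol h k τ ψ ψs φ φs x y)
    :
    (∀ i : Fin N, (i : ℕ) < k → ∀ t : ℝ, -τ ≤ t → ‖x i t‖ ≤ Cinit h k τ x y) ∧
    (∀ i : Fin N, k ≤ (i : ℕ) → ∀ t : ℝ, 0 ≤ t → ‖x i t‖ ≤ Cinit h k τ x y) ∧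
    (∀ j : Fin M, (j : ℕ) < h → ∀ t : ℝ, -τ ≤ t → ‖y j t‖ ≤ Cinit h k τ x y) ∧
    (∀ j : Fin M, h ≤ (j : ℕ) → ∀ t : ℝ, 0 ≤ t → ‖y j t‖ ≤ Cinit h k τ x y) :=
  stmt1_general d N M h k τ hτ ψ ψs φ φs hψ hψs hφ hφs x y hsol
end
end

section
/- Assume 0 < m_0 ≤ M_0 for a unit vector v ∈ ℝ^d. Then the projected velocities are uniformly bounded: |d/dt ⟨x_i(t), v⟩| ≤ 2Λ M_0 for all t > 0 and i = 1,…,N, and |d/dt ⟨y_j(t), v⟩| ≤ 2Λ M_0 for all t > 0 and j = 1,…,M. -/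
open Real Set Filter Topology
open scoped BigOperators RealInnerProductSpace

noncomputable section

private lemma left_slope_nonneg {f : ℝ → ℝ} {t₀ c : ℝ} (hf : HasDerivAt f c t₀)
    (h : ∀ᶠ t in 𝓝[<] t₀, f t ≤ f t₀) : 0 ≤ c := by
  have h1 : Tendsto (slope f t₀) (𝓝[<] t₀) (𝓝 c) :=
    (hasDerivAt_iff_tendsto_slope.mp hf).mono_left
      (nhdsWithin_mono _ fun t ht => ne_of_lt ht)
  refine ge_of_tendsto h1 ?_
  filter_upwards [h, self_mem_nhdsWithin] with t ht ht'
  have h2 : t - t₀ < 0 := sub_neg.mpr ht'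
  have h3 : f t - f t₀ ≤ 0 := sub_nonpos.mpr ht
  rw [slope_def_field, div_nonneg_iff]
  exact Or.inr ⟨h3, h2.le⟩

private lemma no_crossing {p : ℝ → ℝ} {B ε t₀ D : ℝ} (hε : 0 < ε) (ht₀ : 0 < t₀)
    (hp : HasDerivAt p D t₀) (hD : D ≤ 0)
    (heq : p t₀ = B + ε * (1 + t₀))
    (hlt : ∀ t ∈ Ioo (0:ℝ) t₀, p t ≤ B + ε * (1 + t)) : False := by
  have hβ : HasDerivAt (fun t : ℝ => B + ε * (1 + t)) ε t₀ := by
    simpa using (((hasDerivAt_id t₀).const_add (1:ℝ)).const_mul ε).const_add B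
  have hF : HasDerivAt (fun t => p t - (B + ε * (1 + t))) (D - ε) t₀ := hp.sub hβ
  have h0 : 0 ≤ D - ε := by
    apply left_slope_nonneg hF
    filter_upwards [Ioo_mem_nhdsLT_of_mem (⟨ht₀, le_refl t₀⟩ : t₀ ∈ Ioc 0 t₀)] with t ht
    have := hlt t ht
    have htlt : t < t₀ := ht.2
    nlinarith [hε, heq]
  linarith

private lemma hasDerivAt_proj {d : ℕ} {f : ℝ → EuclideanSpace ℝ (Fin d)}
    {V : EuclideanSpace ℝ (Fin d)} {t : ℝ} (hf : HasDerivAt f V t)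
    (w : EuclideanSpace ℝ (Fin d)) :
    HasDerivAt (fun s => ⟪f s, w⟫) ⟪V, w⟫ t := by
  simpa using hf.inner (𝕜 := ℝ) (hasDerivAt_const t w)

private lemma inner_sum_nonpos {d : ℕ} {ι : Type*} (s : Finset ι)
    (c : ι → ℝ) (z : ι → EuclideanSpace ℝ (Fin d)) (p w : EuclideanSpace ℝ (Fin d))
    (hc : ∀ j ∈ s, 0 ≤ c j) (hz : ∀ j ∈ s, ⟪z j, w⟫ ≤ ⟪p, w⟫) :
    ⟪∑ j ∈ s, c j • (z j - p), w⟫ ≤ 0 := by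
  rw [sum_inner]
  refine Finset.sum_nonpos fun j hj => ?_
  rw [real_inner_smul_left, inner_sub_left]
  exact mul_nonpos_of_nonneg_of_nonpos (hc j hj) (sub_nonpos.mpr (hz j hj))

private lemma invariance {d N M h k : ℕ} {τ : ℝ}
    {ψ ψs φ φs : EuclideanSpace ℝ (Fin d) → EuclideanSpace ℝ (Fin d) → ℝ}
    {x : Fin N → ℝ → EuclideanSpace ℝ (Fin d)} {y : Fin M → ℝ → EuclideanSpace ℝ (Fin d)}
    (hN : 2 ≤ N) (hM2 : 2 ≤ M) (hτ : 0 < τ)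
    (hψp : ∀ z₁ z₂, 0 < ψ z₁ z₂) (hψsp : ∀ z₁ z₂, 0 < ψs z₁ z₂)
    (hφp : ∀ z₁ z₂, 0 < φ z₁ z₂) (hφsp : ∀ z₁ z₂, 0 < φs z₁ z₂)
    (hsol : IsSol h k τ ψ ψs φ φs x y)
    (w : EuclideanSpace ℝ (Fin d)) (B : ℝ)
    (hx0 : ∀ i : Fin N, ⟪x i 0, w⟫ ≤ B)
    (hy0 : ∀ j : Fin M, ⟪y j 0, w⟫ ≤ B)
    (hxd : ∀ i : Fin N, (i : ℕ) < k → ∀ t ∈ Icc (-τ) (0:ℝ), ⟪x i t, w⟫ ≤ B)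
    (hyd : ∀ j : Fin M, (j : ℕ) < h → ∀ t ∈ Icc (-τ) (0:ℝ), ⟪y j t, w⟫ ≤ B) :
    ∀ t : ℝ, 0 ≤ t → (∀ i, ⟪x i t, w⟫ ≤ B) ∧ (∀ j, ⟪y j t, w⟫ ≤ B) := by
  haveI : Nonempty (Fin N) := ⟨⟨0, by omega⟩⟩
  haveI : Nonempty (Fin M) := ⟨⟨0, by omega⟩⟩
  have hNe : (Finset.univ : Finset (Fin N)).Nonempty := Finset.univ_nonempty
  have hMe : (Finset.univ : Finset (Fin M)).Nonempty := Finset.univ_nonempty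
  have hdenN : (0:ℝ) < (N : ℝ) + h - 1 := by
    have : (2:ℝ) ≤ (N:ℝ) := by exact_mod_cast hN
    have : (0:ℝ) ≤ (h:ℝ) := Nat.cast_nonneg h
    linarith
  have hdenN' : (0:ℝ) < (N : ℝ) - 1 := by
    have : (2:ℝ) ≤ (N:ℝ) := by exact_mod_cast hN
    linarith
  have hdenM : (0:ℝ) < (M : ℝ) + k - 1 := by
    have : (2:ℝ) ≤ (M:ℝ) := by exact_mod_cast hM2
    have : (0:ℝ) ≤ (k:ℝ) := Nat.cast_nonneg k
    linarith
  have hdenM' : (0:ℝ) < (M : ℝ) - 1 := by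
    have : (2:ℝ) ≤ (M:ℝ) := by exact_mod_cast hM2
    linarith
  -- the barrier claim
  have barrier : ∀ ε : ℝ, 0 < ε → ∀ t : ℝ, 0 ≤ t →
      (∀ i, ⟪x i t, w⟫ ≤ B + ε * (1 + t)) ∧ (∀ j, ⟪y j t, w⟫ ≤ B + ε * (1 + t)) := by
    intro ε hε
    set β : ℝ → ℝ := fun t => B + ε * (1 + t) with hβdef
    have hβmono : Monotone β := fun a b hab => by
      simp only [hβdef]; nlinarith
    set g : ℝ → ℝ := fun t =>
      max (Finset.univ.sup' hNe (fun i : Fin N => ⟪x i t, w⟫))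
          (Finset.univ.sup' hMe (fun j : Fin M => ⟪y j t, w⟫)) - β t with hgdef
    have hgc : Continuous g := by
      apply Continuous.sub
      · exact Continuous.max
          (Continuous.finset_sup'_apply hNe fun i _ => (hsol.contx i).inner continuous_const)
          (Continuous.finset_sup'_apply hMe fun j _ => (hsol.conty j).inner continuous_const)
      · fun_prop
    -- main claim : g t < 0 for all t ≥ 0
    have main : ∀ t : ℝ, 0 ≤ t → g t < 0 := by
      by_contra hcon
      push_neg at hcon
      obtain ⟨t₁, ht₁0, ht₁⟩ := hcon
      set S : Set ℝ := {t | 0 ≤ t} ∩ {t | 0 ≤ g t} with hSdef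
      have hSne : S.Nonempty := ⟨t₁, ht₁0, ht₁⟩
      have hSclosed : IsClosed S :=
        (isClosed_le continuous_const continuous_id).inter
          (isClosed_le continuous_const hgc)
      have hSbdd : BddBelow S := ⟨0, fun t ht => ht.1⟩
      set t₀ := sInf S with ht₀def
      have ht₀S : t₀ ∈ S := hSclosed.csInf_mem hSne hSbdd
      have ht₀0 : 0 ≤ t₀ := ht₀S.1
      have hlt : ∀ t, 0 ≤ t → t < t₀ → g t < 0 := by
        intro t h1 h2
        by_contra hc
        push_neg at hc
        exact absurd (csInf_le hSbdd ⟨h1, hc⟩) (not_le.mpr h2)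
      have hg0 : g 0 < 0 := by
        have h1 : ∀ i : Fin N, ⟪x i 0, w⟫ < β 0 := by
          intro i; have := hx0 i; simp only [hβdef]; nlinarith
        have h2 : ∀ j : Fin M, ⟪y j 0, w⟫ < β 0 := by
          intro j; have := hy0 j; simp only [hβdef]; nlinarith
        have := Finset.sup'_lt_iff (f := fun i : Fin N => ⟪x i 0, w⟫) hNe (a := β 0)
        simp only [hgdef]
        rw [sub_neg, max_lt_iff]
        exact ⟨(Finset.sup'_lt_iff hNe).mpr fun i _ => h1 i,
               (Finset.sup'_lt_iff hMe).mpr fun j _ => h2 j⟩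
      have ht₀pos : 0 < t₀ := by
        rcases lt_or_eq_of_le ht₀0 with hp | hp
        · exact hp
        · exact absurd (hp ▸ ht₀S.2) (not_le.mpr hg0)
      have hgt₀le : g t₀ ≤ 0 := by
        have htd : Tendsto g (𝓝[<] t₀) (𝓝 (g t₀)) :=
          (hgc.tendsto t₀).mono_left nhdsWithin_le_nhds
        refine le_of_tendsto htd ?_
        filter_upwards [Ioo_mem_nhdsLT_of_mem (⟨ht₀pos, le_refl t₀⟩ : t₀ ∈ Ioc 0 t₀)] with t ht
        exact (hlt t ht.1.le ht.2).le
      have hgt₀ : g t₀ = 0 := le_antisymm hgt₀le ht₀S.2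
      -- bounds at t₀
      have hmax : max (Finset.univ.sup' hNe (fun i : Fin N => ⟪x i t₀, w⟫))
          (Finset.univ.sup' hMe (fun j : Fin M => ⟪y j t₀, w⟫)) = β t₀ := by
        have := hgt₀; simp only [hgdef] at this; linarith
      have hPle : ∀ i : Fin N, ⟪x i t₀, w⟫ ≤ β t₀ :=
        fun i => le_trans (Finset.le_sup' (fun i : Fin N => ⟪x i t₀, w⟫) (Finset.mem_univ i)) (le_trans (le_max_left _ _) hmax.le)
      have hQle : ∀ j : Fin M, ⟪y j t₀, w⟫ ≤ β t₀ :=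
        fun j => le_trans (Finset.le_sup' (fun j : Fin M => ⟪y j t₀, w⟫) (Finset.mem_univ j)) (le_trans (le_max_right _ _) hmax.le)
      have hlt' : ∀ t ∈ Ioo (0:ℝ) t₀, (∀ i : Fin N, ⟪x i t, w⟫ ≤ β t) ∧
          (∀ j : Fin M, ⟪y j t, w⟫ ≤ β t) := by
        intro t ht
        have hg := hlt t ht.1.le ht.2
        simp only [hgdef, sub_neg, max_lt_iff] at hg
        constructor
        · intro i
          exact le_trans (Finset.le_sup' (fun i : Fin N => ⟪x i t, w⟫) (Finset.mem_univ i)) hg.1.le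
        · intro j
          exact le_trans (Finset.le_sup' (fun j : Fin M => ⟪y j t, w⟫) (Finset.mem_univ j)) hg.2.le
      -- delayed bounds at t₀
      have hdelY : ∀ j : Fin M, (j : ℕ) < h → ⟪y j (t₀ - τ), w⟫ ≤ β t₀ := by
        intro j hj
        rcases le_or_gt (t₀ - τ) 0 with hc | hc
        · refine (hyd j hj (t₀ - τ) ⟨by linarith, hc⟩).trans ?_
          simp only [hβdef]; nlinarith
        · exact ((hlt' (t₀ - τ) ⟨hc, by linarith⟩).2 j).trans (hβmono (by linarith))
      have hdelX : ∀ j : Fin N, (j : ℕ) < k → ⟪x j (t₀ - τ), w⟫ ≤ β t₀ := by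
        intro j hj
        rcases le_or_gt (t₀ - τ) 0 with hc | hc
        · refine (hxd j hj (t₀ - τ) ⟨by linarith, hc⟩).trans ?_
          simp only [hβdef]; nlinarith
        · exact ((hlt' (t₀ - τ) ⟨hc, by linarith⟩).1 j).trans (hβmono (by linarith))
      -- a generic no-crossing contradiction
      have cross : ∀ (q : ℝ → ℝ) (DD : ℝ), HasDerivAt q DD t₀ → DD ≤ 0 →
          q t₀ = β t₀ → (∀ t ∈ Ioo (0:ℝ) t₀, q t ≤ β t) → False := by
        intro q DD hq hDD hqeq hqlt
        exact no_crossing hε ht₀pos hq hDD (by simpa [hβdef] using hqeq)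
          (fun t ht => by simpa [hβdef] using hqlt t ht)
      rcases le_total (Finset.univ.sup' hNe (fun i : Fin N => ⟪x i t₀, w⟫))
          (Finset.univ.sup' hMe (fun j : Fin M => ⟪y j t₀, w⟫)) with hc | hc
      · -- achiever in y
        obtain ⟨j, -, hjeq⟩ := Finset.exists_mem_eq_sup' hMe (fun j : Fin M => ⟪y j t₀, w⟫)
        have hjβ : ⟪y j t₀, w⟫ = β t₀ := by rw [← hjeq]; rw [max_eq_right hc] at hmax; exact hmax
        have hqlt : ∀ t ∈ Ioo (0:ℝ) t₀, ⟪y j t, w⟫ ≤ β t := fun t ht => (hlt' t ht).2 j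
        rcases lt_or_ge (j : ℕ) h with hjh | hjh
        · refine cross _ _ (hasDerivAt_proj (hsol.odey_lead j hjh t₀ ht₀pos) w) ?_ hjβ hqlt
          rw [inner_add_left]
          refine add_nonpos ?_ ?_
          · refine inner_sum_nonpos _ _ _ _ _ (fun j' _ => ?_) (fun j' _ => ?_)
            · exact div_nonneg (hψsp _ _).le hdenM.le
            · rw [hjβ]; exact hQle j'
          · refine inner_sum_nonpos _ _ _ _ _ (fun j' _ => ?_) (fun j' hj' => ?_)
            · exact div_nonneg (hφsp _ _).le hdenM.le
            · rw [hjβ]; exact hdelX j' (Finset.mem_filter.mp hj').2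
        · refine cross _ _ (hasDerivAt_proj (hsol.odey_foll j hjh t₀ ht₀pos) w) ?_ hjβ hqlt
          refine inner_sum_nonpos _ _ _ _ _ (fun j' _ => ?_) (fun j' _ => ?_)
          · exact div_nonneg (hψsp _ _).le hdenM'.le
          · rw [hjβ]; exact hQle j'
      · -- achiever in x
        obtain ⟨i, -, hieq⟩ := Finset.exists_mem_eq_sup' hNe (fun i : Fin N => ⟪x i t₀, w⟫)
        have hiβ : ⟪x i t₀, w⟫ = β t₀ := by rw [← hieq]; rw [max_eq_left hc] at hmax; exact hmax
        have hqlt : ∀ t ∈ Ioo (0:ℝ) t₀, ⟪x i t, w⟫ ≤ β t := fun t ht => (hlt' t ht).1 i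
        rcases lt_or_ge (i : ℕ) k with hik | hik
        · refine cross _ _ (hasDerivAt_proj (hsol.odex_lead i hik t₀ ht₀pos) w) ?_ hiβ hqlt
          rw [inner_add_left]
          refine add_nonpos ?_ ?_
          · refine inner_sum_nonpos _ _ _ _ _ (fun j' _ => ?_) (fun j' _ => ?_)
            · exact div_nonneg (hψp _ _).le hdenN.le
            · rw [hiβ]; exact hPle j'
          · refine inner_sum_nonpos _ _ _ _ _ (fun j' _ => ?_) (fun j' hj' => ?_)
            · exact div_nonneg (hφp _ _).le hdenN.le
            · rw [hiβ]; exact hdelY j' (Finset.mem_filter.mp hj').2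
        · refine cross _ _ (hasDerivAt_proj (hsol.odex_foll i hik t₀ ht₀pos) w) ?_ hiβ hqlt
          refine inner_sum_nonpos _ _ _ _ _ (fun j' _ => ?_) (fun j' _ => ?_)
          · exact div_nonneg (hψp _ _).le hdenN'.le
          · rw [hiβ]; exact hPle j'
    intro t ht
    have hg := main t ht
    simp only [hgdef, sub_neg, max_lt_iff] at hg
    refine ⟨fun i => ?_, fun j => ?_⟩
    · exact le_trans (Finset.le_sup' (fun i : Fin N => ⟪x i t, w⟫) (Finset.mem_univ i)) hg.1.le
    · exact le_trans (Finset.le_sup' (fun j : Fin M => ⟪y j t, w⟫) (Finset.mem_univ j)) hg.2.le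
  -- ε → 0
  intro t ht
  have key : ∀ c : ℝ, (∀ ε : ℝ, 0 < ε → c ≤ B + ε * (1 + t)) → c ≤ B := by
    intro c hc
    refine le_of_forall_pos_le_add fun δ hδ => ?_
    have h1t : (0:ℝ) < 1 + t := by linarith
    have := hc (δ / (1 + t)) (div_pos hδ h1t)
    rw [div_mul_cancel₀] at this
    · linarith
    · exact ne_of_gt h1t
  exact ⟨fun i => key _ fun ε hε => (barrier ε hε t ht).1 i,
         fun j => key _ fun ε hε => (barrier ε hε t ht).2 j⟩

private lemma abs_inner_sum_le {d : ℕ} {ι : Type*} (s : Finset ι) (c : ι → ℝ)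
    (z : ι → EuclideanSpace ℝ (Fin d)) (p w : EuclideanSpace ℝ (Fin d)) {L C : ℝ}
    (hc : ∀ j ∈ s, 0 ≤ c j) (hc' : ∀ j ∈ s, c j ≤ L)
    (hz : ∀ j ∈ s, |⟪z j, w⟫ - ⟪p, w⟫| ≤ C) :
    |⟪∑ j ∈ s, c j • (z j - p), w⟫| ≤ (s.card : ℝ) * (L * C) := by
  rw [sum_inner]
  refine (Finset.abs_sum_le_sum_abs _ _).trans ?_
  have hb : ∀ j ∈ s, |⟪c j • (z j - p), w⟫| ≤ L * C := by
    intro j hj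
    rw [real_inner_smul_left, abs_mul, abs_of_nonneg (hc j hj), inner_sub_left]
    have h1 := hz j hj
    have h2 := hc j hj
    have h3 := hc' j hj
    have h4 : (0:ℝ) ≤ |⟪z j, w⟫ - ⟪p, w⟫| := abs_nonneg _
    nlinarith
  calc ∑ j ∈ s, |⟪c j • (z j - p), w⟫| ≤ ∑ _j ∈ s, L * C := Finset.sum_le_sum hb
    _ = (s.card : ℝ) * (L * C) := by rw [Finset.sum_const, nsmul_eq_mul]

private lemma bddAbove_range_proj {α : Type*} [Finite α] {a b : ℝ}
    (f : α → ℝ → ℝ) (hf : ∀ i, Continuous (f i)) :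
    BddAbove (Set.range fun p : α × Icc a b => f p.1 (p.2 : ℝ)) := by
  have key : ∀ i : α, ∃ C, ∀ t ∈ Icc a b, f i t ≤ C := by
    intro i
    rcases (isCompact_Icc.image_of_continuousOn (hf i).continuousOn).bddAbove with ⟨C, hC⟩
    exact ⟨C, fun t ht => hC (Set.mem_image_of_mem _ ht)⟩
  choose C hC using key
  rcases Finite.exists_le C with ⟨D, hD⟩
  refine ⟨D, ?_⟩
  rintro _ ⟨p, rfl⟩
  exact (hC p.1 p.2 p.2.2).trans (hD p.1)

private lemma bddBelow_range_proj {α : Type*} [Finite α] {a b : ℝ}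
    (f : α → ℝ → ℝ) (hf : ∀ i, Continuous (f i)) :
    BddBelow (Set.range fun p : α × Icc a b => f p.1 (p.2 : ℝ)) := by
  have := bddAbove_range_proj (a := a) (b := b) (fun i t => -(f i t)) (fun i => (hf i).neg)
  rcases this with ⟨D, hD⟩
  refine ⟨-D, ?_⟩
  rintro _ ⟨p, rfl⟩
  have := hD (Set.mem_range_self p)
  simpa using neg_le_neg this

set_option maxHeartbeats 1000000 in
theorem stmt3
    (d N M h k : ℕ) (hd : 1 ≤ d) (hN : 2 ≤ N) (hM2 : 2 ≤ M) (hMN : M ≤ N)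
    (hh1 : 1 ≤ h) (hhM : h < M) (hk1 : 1 ≤ k) (hkN : k < N)
    (τ : ℝ) (hτ : 0 < τ)
    (ψ ψs φ φs : EuclideanSpace ℝ (Fin d) → EuclideanSpace ℝ (Fin d) → ℝ)
    (hψ : Admissible ψ) (hψs : Admissible ψs) (hφ : Admissible φ) (hφs : Admissible φs)
    (x : Fin N → ℝ → EuclideanSpace ℝ (Fin d)) (y : Fin M → ℝ → EuclideanSpace ℝ (Fin d))
    (hsol : IsSol h k τ ψ ψs φ φs x y)
    (v : EuclideanSpace ℝ (Fin d)) (hv : ‖v‖ = 1)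
    (hm₀pos : 0 < mInit h k τ v x y) (hm₀M₀ : mInit h k τ v x y ≤ MInit h k τ v x y) :
    (∀ i : Fin N, ∀ t : ℝ, 0 < t → ∀ D : ℝ,
        HasDerivAt (fun s => ⟪x i s, v⟫) D t →
          |D| ≤ 2 * Lam ψ ψs φ φs * MInit h k τ v x y) ∧
    (∀ j : Fin M, ∀ t : ℝ, 0 < t → ∀ D : ℝ,
        HasDerivAt (fun s => ⟪y j s, v⟫) D t →
          |D| ≤ 2 * Lam ψ ψs φ φs * MInit h k τ v x y) := by
  set Λ := Lam ψ ψs φ φs with hΛdef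
  set m₀ := mInit h k τ v x y with hm₀def
  set M₀ := MInit h k τ v x y with hM₀def
  have hΛψ : ∀ a b, ψ a b ≤ Λ := fun a b =>
    le_trans (le_ciSup hψ.2.2 (a, b)) ((le_max_left _ _).trans (le_max_left _ _))
  have hΛψs : ∀ a b, ψs a b ≤ Λ := fun a b =>
    le_trans (le_ciSup hψs.2.2 (a, b)) ((le_max_right _ _).trans (le_max_left _ _))
  have hΛφ : ∀ a b, φ a b ≤ Λ := fun a b =>
    le_trans (le_ciSup hφ.2.2 (a, b)) ((le_max_left _ _).trans (le_max_right _ _))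
  have hΛφs : ∀ a b, φs a b ≤ Λ := fun a b =>
    le_trans (le_ciSup hφs.2.2 (a, b)) ((le_max_right _ _).trans (le_max_right _ _))
  have hΛpos : 0 < Λ := lt_of_lt_of_le (hψ.2.1 0 0) (hΛψ 0 0)
  have hM₀pos : 0 < M₀ := lt_of_lt_of_le hm₀pos hm₀M₀
  have hdenN : (0:ℝ) < (N : ℝ) + h - 1 := by
    have h1 : (2:ℝ) ≤ (N:ℝ) := by exact_mod_cast hN
    have h2 : (0:ℝ) ≤ (h:ℝ) := Nat.cast_nonneg h
    linarith
  have hdenN' : (0:ℝ) < (N : ℝ) - 1 := by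
    have h1 : (2:ℝ) ≤ (N:ℝ) := by exact_mod_cast hN
    linarith
  have hdenM : (0:ℝ) < (M : ℝ) + k - 1 := by
    have h1 : (2:ℝ) ≤ (M:ℝ) := by exact_mod_cast hM2
    have h2 : (0:ℝ) ≤ (k:ℝ) := Nat.cast_nonneg k
    linarith
  have hdenM' : (0:ℝ) < (M : ℝ) - 1 := by
    have h1 : (2:ℝ) ≤ (M:ℝ) := by exact_mod_cast hM2
    linarith
  haveI : Nonempty {i : Fin N // (i : ℕ) < k} := ⟨⟨⟨0, by omega⟩, by simp; omega⟩⟩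
  haveI : Nonempty {i : Fin N // k ≤ (i : ℕ)} := ⟨⟨⟨k, hkN⟩, by simp⟩⟩
  haveI : Nonempty {j : Fin M // (j : ℕ) < h} := ⟨⟨⟨0, by omega⟩, by simp; omega⟩⟩
  haveI : Nonempty {j : Fin M // h ≤ (j : ℕ)} := ⟨⟨⟨h, hhM⟩, by simp⟩⟩
  haveI : Nonempty (Icc (-τ) (0:ℝ)) := ⟨⟨0, Set.mem_Icc.mpr ⟨by linarith, le_refl 0⟩⟩⟩
  -- initial data bounds
  have bA1 : BddAbove (Set.range fun p : {i : Fin N // (i : ℕ) < k} × Icc (-τ) (0:ℝ) =>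
      ⟪x p.1.1 (p.2 : ℝ), v⟫) :=
    bddAbove_range_proj (fun (i : {i : Fin N // (i : ℕ) < k}) t => ⟪x i.1 t, v⟫) (fun i => (hsol.contx i.1).inner continuous_const)
  have bB1 : BddBelow (Set.range fun p : {i : Fin N // (i : ℕ) < k} × Icc (-τ) (0:ℝ) =>
      ⟪x p.1.1 (p.2 : ℝ), v⟫) :=
    bddBelow_range_proj (fun (i : {i : Fin N // (i : ℕ) < k}) t => ⟪x i.1 t, v⟫) (fun i => (hsol.contx i.1).inner continuous_const)
  have bA2 : BddAbove (Set.range fun p : {j : Fin M // (j : ℕ) < h} × Icc (-τ) (0:ℝ) =>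
      ⟪y p.1.1 (p.2 : ℝ), v⟫) :=
    bddAbove_range_proj (fun (j : {j : Fin M // (j : ℕ) < h}) t => ⟪y j.1 t, v⟫) (fun j => (hsol.conty j.1).inner continuous_const)
  have bB2 : BddBelow (Set.range fun p : {j : Fin M // (j : ℕ) < h} × Icc (-τ) (0:ℝ) =>
      ⟪y p.1.1 (p.2 : ℝ), v⟫) :=
    bddBelow_range_proj (fun (j : {j : Fin M // (j : ℕ) < h}) t => ⟪y j.1 t, v⟫) (fun j => (hsol.conty j.1).inner continuous_const)
  have upX_lead : ∀ i : Fin N, (i : ℕ) < k → ∀ t ∈ Icc (-τ) (0:ℝ), ⟪x i t, v⟫ ≤ M₀ := by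
    intro i hik t ht
    exact le_trans (le_ciSup bA1 ⟨⟨i, hik⟩, ⟨t, ht⟩⟩) ((le_max_left _ _).trans (le_max_left _ _))
  have loX_lead : ∀ i : Fin N, (i : ℕ) < k → ∀ t ∈ Icc (-τ) (0:ℝ), m₀ ≤ ⟪x i t, v⟫ := by
    intro i hik t ht
    exact le_trans ((min_le_left _ _).trans (min_le_left _ _)) (ciInf_le bB1 ⟨⟨i, hik⟩, ⟨t, ht⟩⟩)
  have upY_lead : ∀ j : Fin M, (j : ℕ) < h → ∀ t ∈ Icc (-τ) (0:ℝ), ⟪y j t, v⟫ ≤ M₀ := by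
    intro j hjh t ht
    exact le_trans (le_ciSup bA2 ⟨⟨j, hjh⟩, ⟨t, ht⟩⟩) ((le_max_left _ _).trans (le_max_right _ _))
  have loY_lead : ∀ j : Fin M, (j : ℕ) < h → ∀ t ∈ Icc (-τ) (0:ℝ), m₀ ≤ ⟪y j t, v⟫ := by
    intro j hjh t ht
    exact le_trans ((min_le_right _ _).trans (min_le_left _ _)) (ciInf_le bB2 ⟨⟨j, hjh⟩, ⟨t, ht⟩⟩)
  have upX_foll : ∀ i : Fin N, k ≤ (i : ℕ) → ⟪x i 0, v⟫ ≤ M₀ := by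
    intro i hik
    exact le_trans (le_ciSup (f := fun i : {i : Fin N // k ≤ (i : ℕ)} => ⟪x i.1 0, v⟫)
      (Set.Finite.bddAbove (Set.finite_range _)) ⟨i, hik⟩)
      ((le_max_right _ _).trans (le_max_left _ _))
  have loX_foll : ∀ i : Fin N, k ≤ (i : ℕ) → m₀ ≤ ⟪x i 0, v⟫ := by
    intro i hik
    exact le_trans ((min_le_left _ _).trans (min_le_right _ _))
      (ciInf_le (f := fun i : {i : Fin N // k ≤ (i : ℕ)} => ⟪x i.1 0, v⟫)
      (Set.Finite.bddBelow (Set.finite_range _)) ⟨i, hik⟩)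
  have upY_foll : ∀ j : Fin M, h ≤ (j : ℕ) → ⟪y j 0, v⟫ ≤ M₀ := by
    intro j hjh
    exact le_trans (le_ciSup (f := fun j : {j : Fin M // h ≤ (j : ℕ)} => ⟪y j.1 0, v⟫)
      (Set.Finite.bddAbove (Set.finite_range _)) ⟨j, hjh⟩)
      ((le_max_right _ _).trans (le_max_right _ _))
  have loY_foll : ∀ j : Fin M, h ≤ (j : ℕ) → m₀ ≤ ⟪y j 0, v⟫ := by
    intro j hjh
    exact le_trans ((min_le_right _ _).trans (min_le_right _ _))
      (ciInf_le (f := fun j : {j : Fin M // h ≤ (j : ℕ)} => ⟪y j.1 0, v⟫)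
      (Set.Finite.bddBelow (Set.finite_range _)) ⟨j, hjh⟩)
  have h0mem : (0:ℝ) ∈ Icc (-τ) (0:ℝ) := Set.mem_Icc.mpr ⟨by linarith, le_refl 0⟩
  have upX0 : ∀ i : Fin N, ⟪x i 0, v⟫ ≤ M₀ := fun i => by
    rcases lt_or_ge (i : ℕ) k with hik | hik
    · exact upX_lead i hik 0 h0mem
    · exact upX_foll i hik
  have loX0 : ∀ i : Fin N, m₀ ≤ ⟪x i 0, v⟫ := fun i => by
    rcases lt_or_ge (i : ℕ) k with hik | hik
    · exact loX_lead i hik 0 h0mem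
    · exact loX_foll i hik
  have upY0 : ∀ j : Fin M, ⟪y j 0, v⟫ ≤ M₀ := fun j => by
    rcases lt_or_ge (j : ℕ) h with hjh | hjh
    · exact upY_lead j hjh 0 h0mem
    · exact upY_foll j hjh
  have loY0 : ∀ j : Fin M, m₀ ≤ ⟪y j 0, v⟫ := fun j => by
    rcases lt_or_ge (j : ℕ) h with hjh | hjh
    · exact loY_lead j hjh 0 h0mem
    · exact loY_foll j hjh
  -- invariance
  have inv_up := invariance hN hM2 hτ hψ.2.1 hψs.2.1 hφ.2.1 hφs.2.1 hsol v M₀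
    upX0 upY0 upX_lead upY_lead
  have inv_lo := invariance hN hM2 hτ hψ.2.1 hψs.2.1 hφ.2.1 hφs.2.1 hsol (-v) (-m₀)
    (fun i => by rw [inner_neg_right]; linarith [loX0 i])
    (fun j => by rw [inner_neg_right]; linarith [loY0 j])
    (fun i hik t ht => by rw [inner_neg_right]; linarith [loX_lead i hik t ht])
    (fun j hjh t ht => by rw [inner_neg_right]; linarith [loY_lead j hjh t ht])
  have boundsX : ∀ t : ℝ, 0 ≤ t → ∀ i : Fin N, m₀ ≤ ⟪x i t, v⟫ ∧ ⟪x i t, v⟫ ≤ M₀ := by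
    intro t ht i
    refine ⟨?_, (inv_up t ht).1 i⟩
    have := (inv_lo t ht).1 i
    rw [inner_neg_right] at this; linarith
  have boundsY : ∀ t : ℝ, 0 ≤ t → ∀ j : Fin M, m₀ ≤ ⟪y j t, v⟫ ∧ ⟪y j t, v⟫ ≤ M₀ := by
    intro t ht j
    refine ⟨?_, (inv_up t ht).2 j⟩
    have := (inv_lo t ht).2 j
    rw [inner_neg_right] at this; linarith
  have boundsYdel : ∀ t : ℝ, 0 < t → ∀ j : Fin M, (j : ℕ) < h →
      m₀ ≤ ⟪y j (t - τ), v⟫ ∧ ⟪y j (t - τ), v⟫ ≤ M₀ := by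
    intro t ht j hj
    rcases le_or_gt (t - τ) 0 with hc | hc
    · exact ⟨loY_lead j hj _ ⟨by linarith, hc⟩, upY_lead j hj _ ⟨by linarith, hc⟩⟩
    · exact boundsY _ hc.le j
  have boundsXdel : ∀ t : ℝ, 0 < t → ∀ i : Fin N, (i : ℕ) < k →
      m₀ ≤ ⟪x i (t - τ), v⟫ ∧ ⟪x i (t - τ), v⟫ ≤ M₀ := by
    intro t ht i hi
    rcases le_or_gt (t - τ) 0 with hc | hc
    · exact ⟨loX_lead i hi _ ⟨by linarith, hc⟩, upX_lead i hi _ ⟨by linarith, hc⟩⟩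
    · exact boundsX _ hc.le i
  have hdiff : ∀ a b : ℝ, m₀ ≤ a → a ≤ M₀ → m₀ ≤ b → b ≤ M₀ → |a - b| ≤ M₀ := by
    intro a b h1 h2 h3 h4
    rw [abs_le]; constructor <;> linarith [hm₀pos]
  -- cardinalities
  have cardFh : (((Finset.univ.filter fun j : Fin M => (j : ℕ) < h).card : ℕ) : ℝ) = h := by
    have he : Finset.univ.filter (fun j : Fin M => (j : ℕ) < h) = Finset.Iio (⟨h, hhM⟩ : Fin M) := by
      ext j; simp [Finset.mem_Iio, Fin.lt_def]
    rw [he, Fin.card_Iio]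
  have cardFk : (((Finset.univ.filter fun j : Fin N => (j : ℕ) < k).card : ℕ) : ℝ) = k := by
    have he : Finset.univ.filter (fun j : Fin N => (j : ℕ) < k) = Finset.Iio (⟨k, hkN⟩ : Fin N) := by
      ext j; simp [Finset.mem_Iio, Fin.lt_def]
    rw [he, Fin.card_Iio]
  constructor
  · -- x population
    intro i t ht D hD
    rcases lt_or_ge (i : ℕ) k with hik | hik
    · -- leader
      have hode := hsol.odex_lead i hik t ht
      have hDeq := hD.unique (hasDerivAt_proj hode v)
      rw [hDeq, inner_add_left]
      have h1 := abs_inner_sum_le (Finset.univ.erase i)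
        (fun j => ψ (x i t) (x j t) / ((N : ℝ) + h - 1)) (fun j => x j t) (x i t) v
        (L := Λ / ((N : ℝ) + h - 1)) (C := M₀)
        (fun j _ => div_nonneg (hψ.2.1 _ _).le hdenN.le)
        (fun j _ => (div_le_div_iff_of_pos_right hdenN).mpr (hΛψ _ _))
        (fun j _ => hdiff _ _ (boundsX t ht.le j).1 (boundsX t ht.le j).2
          (boundsX t ht.le i).1 (boundsX t ht.le i).2)
      have h2 := abs_inner_sum_le (Finset.univ.filter fun j : Fin M => (j : ℕ) < h)
        (fun j => φ (x i t) (y j (t - τ)) / ((N : ℝ) + h - 1)) (fun j => y j (t - τ)) (x i t) v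
        (L := Λ / ((N : ℝ) + h - 1)) (C := M₀)
        (fun j _ => div_nonneg (hφ.2.1 _ _).le hdenN.le)
        (fun j _ => (div_le_div_iff_of_pos_right hdenN).mpr (hΛφ _ _))
        (fun j hj => by
          have hjh := (Finset.mem_filter.mp hj).2
          exact hdiff _ _ (boundsYdel t ht j hjh).1 (boundsYdel t ht j hjh).2
            (boundsX t ht.le i).1 (boundsX t ht.le i).2)
      have hcard : (((Finset.univ.erase i).card : ℕ) : ℝ) = (N : ℝ) - 1 := by
        rw [Finset.card_erase_of_mem (Finset.mem_univ i), Finset.card_univ, Fintype.card_fin]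
        have : 1 ≤ N := by omega
        push_cast [Nat.cast_sub this]; ring
      rw [hcard] at h1
      rw [cardFh] at h2
      have harith : ((N : ℝ) - 1) * (Λ / ((N : ℝ) + h - 1) * M₀) +
          (h : ℝ) * (Λ / ((N : ℝ) + h - 1) * M₀) = Λ * M₀ := by
        field_simp
        ring
      calc |⟪_, v⟫ + ⟪_, v⟫| ≤ _ + _ := abs_add_le _ _
        _ ≤ ((N : ℝ) - 1) * (Λ / ((N : ℝ) + h - 1) * M₀) +
            (h : ℝ) * (Λ / ((N : ℝ) + h - 1) * M₀) := add_le_add h1 h2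
        _ = Λ * M₀ := harith
        _ ≤ 2 * Λ * M₀ := by nlinarith
    · -- follower
      have hode := hsol.odex_foll i hik t ht
      have hDeq := hD.unique (hasDerivAt_proj hode v)
      rw [hDeq]
      have h1 := abs_inner_sum_le (Finset.univ.erase i)
        (fun j => ψ (x i t) (x j t) / ((N : ℝ) - 1)) (fun j => x j t) (x i t) v
        (L := Λ / ((N : ℝ) - 1)) (C := M₀)
        (fun j _ => div_nonneg (hψ.2.1 _ _).le hdenN'.le)
        (fun j _ => (div_le_div_iff_of_pos_right hdenN').mpr (hΛψ _ _))
        (fun j _ => hdiff _ _ (boundsX t ht.le j).1 (boundsX t ht.le j).2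
          (boundsX t ht.le i).1 (boundsX t ht.le i).2)
      have hcard : (((Finset.univ.erase i).card : ℕ) : ℝ) = (N : ℝ) - 1 := by
        rw [Finset.card_erase_of_mem (Finset.mem_univ i), Finset.card_univ, Fintype.card_fin]
        have : 1 ≤ N := by omega
        push_cast [Nat.cast_sub this]; ring
      rw [hcard] at h1
      have harith : ((N : ℝ) - 1) * (Λ / ((N : ℝ) - 1) * M₀) = Λ * M₀ := by
        field_simp
      refine h1.trans ?_
      rw [harith]
      nlinarith
  · -- y population
    intro j t ht D hD
    rcases lt_or_ge (j : ℕ) h with hjh | hjh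
    · -- leader
      have hode := hsol.odey_lead j hjh t ht
      have hDeq := hD.unique (hasDerivAt_proj hode v)
      rw [hDeq, inner_add_left]
      have h1 := abs_inner_sum_le (Finset.univ.erase j)
        (fun j' => ψs (y j t) (y j' t) / ((M : ℝ) + k - 1)) (fun j' => y j' t) (y j t) v
        (L := Λ / ((M : ℝ) + k - 1)) (C := M₀)
        (fun j' _ => div_nonneg (hψs.2.1 _ _).le hdenM.le)
        (fun j' _ => (div_le_div_iff_of_pos_right hdenM).mpr (hΛψs _ _))
        (fun j' _ => hdiff _ _ (boundsY t ht.le j').1 (boundsY t ht.le j').2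
          (boundsY t ht.le j).1 (boundsY t ht.le j).2)
      have h2 := abs_inner_sum_le (Finset.univ.filter fun j' : Fin N => (j' : ℕ) < k)
        (fun j' => φs (y j t) (x j' (t - τ)) / ((M : ℝ) + k - 1)) (fun j' => x j' (t - τ)) (y j t) v
        (L := Λ / ((M : ℝ) + k - 1)) (C := M₀)
        (fun j' _ => div_nonneg (hφs.2.1 _ _).le hdenM.le)
        (fun j' _ => (div_le_div_iff_of_pos_right hdenM).mpr (hΛφs _ _))
        (fun j' hj' => by
          have hj'k := (Finset.mem_filter.mp hj').2
          exact hdiff _ _ (boundsXdel t ht j' hj'k).1 (boundsXdel t ht j' hj'k).2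
            (boundsY t ht.le j).1 (boundsY t ht.le j).2)
      have hcard : (((Finset.univ.erase j).card : ℕ) : ℝ) = (M : ℝ) - 1 := by
        rw [Finset.card_erase_of_mem (Finset.mem_univ j), Finset.card_univ, Fintype.card_fin]
        have : 1 ≤ M := by omega
        push_cast [Nat.cast_sub this]; ring
      rw [hcard] at h1
      rw [cardFk] at h2
      have harith : ((M : ℝ) - 1) * (Λ / ((M : ℝ) + k - 1) * M₀) +
          (k : ℝ) * (Λ / ((M : ℝ) + k - 1) * M₀) = Λ * M₀ := by
        field_simp
        ring
      calc |⟪_, v⟫ + ⟪_, v⟫| ≤ _ + _ := abs_add_le _ _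
        _ ≤ ((M : ℝ) - 1) * (Λ / ((M : ℝ) + k - 1) * M₀) +
            (k : ℝ) * (Λ / ((M : ℝ) + k - 1) * M₀) := add_le_add h1 h2
        _ = Λ * M₀ := harith
        _ ≤ 2 * Λ * M₀ := by nlinarith
    · -- follower
      have hode := hsol.odey_foll j hjh t ht
      have hDeq := hD.unique (hasDerivAt_proj hode v)
      rw [hDeq]
      have h1 := abs_inner_sum_le (Finset.univ.erase j)
        (fun j' => ψs (y j t) (y j' t) / ((M : ℝ) - 1)) (fun j' => y j' t) (y j t) v
        (L := Λ / ((M : ℝ) - 1)) (C := M₀)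
        (fun j' _ => div_nonneg (hψs.2.1 _ _).le hdenM'.le)
        (fun j' _ => (div_le_div_iff_of_pos_right hdenM').mpr (hΛψs _ _))
        (fun j' _ => hdiff _ _ (boundsY t ht.le j').1 (boundsY t ht.le j').2
          (boundsY t ht.le j).1 (boundsY t ht.le j).2)
      have hcard : (((Finset.univ.erase j).card : ℕ) : ℝ) = (M : ℝ) - 1 := by
        rw [Finset.card_erase_of_mem (Finset.mem_univ j), Finset.card_univ, Fintype.card_fin]
        have : 1 ≤ M := by omega
        push_cast [Nat.cast_sub this]; ring
      rw [hcard] at h1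
      have harith : ((M : ℝ) - 1) * (Λ / ((M : ℝ) - 1) * M₀) = Λ * M₀ := by
        field_simp
      refine h1.trans ?_
      rw [harith]
      nlinarith
end
end
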